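/- Consider the repeated game setting: $X$ is drawn from $P = Q^{\otimes n}$ over $\mathcal{X}^{\otimes n}$, $E = E^1 \times \dots \times E^k \subseteq \mathcal{X}^{\otimes n}$ is a product event with $\alpha := \Pr[E] > 0$. Let $i \in [n]$, and let $\mathcal{R}_i$ be any $(m, \epsilon)$-generalized random restriction acting only on coordinates $[n] \setminus \{i\}$, with $\epsilon < \alpha$, and suppose $\mathbb{E}_{\rho \sim \mathcal{R}_i | E} \| P_{X_i | E, E_\rho} - Q \|_1 \ge \beta$ for some $\beta \in (0,1]$. Let $\mathcal{R}$ be the generalized random restriction on $\mathcal{X}^{\otimes n}$ obtained by sampling $\rho \sim \mathcal{R}_i$, $\tilde{x} \sim Q$, and additionally fixing coordinate $i$ to $\tilde{x}$. Then $\mathcal{R}$ is an $(m, \epsilon)$-generalized random restriction on $\mathcal{X}^{\otimes n}$, and $\mathbb{E}_{\rho' \sim \mathcal{R}}[\Pr[E | E_{\rho'}]^2] \ge \alpha^2 (1 + \beta^2 - 6\epsilon/\alpha)$. -/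

import Mathlib

/-- A generalized restriction `ρ = (T₁, …, T_m, I, z)` on `Σ^n`. -/
structure GenRestr (Sig : Type*) (n : ℕ) where
  m : ℕ
  T : Fin m → Finset (Fin n)
  I : Finset (Fin n)
  z : Fin n → Sig
  hT : ∀ j, (T j).Nonempty
  hdisj : ∀ j j', j ≠ j' → Disjoint (T j) (T j')
  hdisjI : ∀ j, Disjoint (T j) I
  hcover : ∀ i : Fin n, i ∈ I ∨ ∃ j, i ∈ T j

/-- The event `E_ρ ⊆ Σ^n` of a generalized restriction. -/
def GenRestr.event {Sig : Type*} {n : ℕ} (ρ : GenRestr Sig n) : Set (Fin n → Sig) :=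
  {x | (∀ j, ∀ i ∈ ρ.T j, ∀ i' ∈ ρ.T j, x i = x i') ∧ ∀ i ∈ ρ.I, x i = ρ.z i}

open Classical in
/-- The probability of `A ⊆ Σ^n` under the product measure `μ^{⊗n}`. -/
noncomputable def prOf {Sig : Type*} [Fintype Sig] {n : ℕ} (μ : Sig → ℝ)
    (A : Set (Fin n → Sig)) : ℝ :=
  ∑ x : Fin n → Sig, if x ∈ A then ∏ i, μ (x i) else 0

open Classical in
/-- The conditional distribution `μ^{⊗n} | A` evaluated at `x`. -/
noncomputable def condDist {Sig : Type*} [Fintype Sig] {n : ℕ} (μ : Sig → ℝ)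
    (A : Set (Fin n → Sig)) (x : Fin n → Sig) : ℝ :=
  (if x ∈ A then ∏ i, μ (x i) else 0) / prOf μ A

/-!
Fix a restriction `ρ` and write `q x̃ = Pr[E | E_ρ, Xᵢ = x̃]`, `p = Pr[E | E_ρ]`. Since `E_ρ` does
not constrain coordinate `i`, `Pr[E_ρ, Xᵢ = x̃] = Q x̃ · Pr[E_ρ]`; hence `p = 𝔼_Q q` and
`p · ‖P_{Xᵢ|E,E_ρ} - Q‖₁ = 𝔼_Q |q - p|`, so the energy `𝔼_Q q² = p² + Var_Q q` is at least
`p² + (𝔼_Q |q - p|)²`. Reweighting `𝓡ᵢ | E` back to `𝓡ᵢ`, the skew hypothesis reads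
`𝔼_ρ (p · ‖P_{Xᵢ|E,E_ρ} - Q‖₁) ≥ β 𝔼_ρ p`, so Jensen over `ρ` bounds the average energy below by
`(1 + β²) (𝔼_ρ p)²`; and `𝔼_ρ p` is `ε`-close to `α` because the mixture of the conditional
distributions is `ε`-close to `Q^{⊗n}` in `ℓ¹`. The same independence shows that averaging over
`x̃ ∼ Q` undoes the extra fixing, so `𝓡` has the same mixture as `𝓡ᵢ`.
-/

open Finset

section prOf

variable {Sig : Type*} [Fintype Sig] {n : ℕ} {μ : Sig → ℝ}

lemma prOf_nonneg (hμ : ∀ s, 0 ≤ μ s) (A : Set (Fin n → Sig)) : 0 ≤ prOf μ A :=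
  sum_nonneg fun _ _ => by split_ifs <;> first | exact prod_nonneg fun _ _ => hμ _ | rfl

lemma prOf_mono (hμ : ∀ s, 0 ≤ μ s) {A B : Set (Fin n → Sig)} (h : A ⊆ B) :
    prOf μ A ≤ prOf μ B := by
  refine sum_le_sum fun x _ => ?_
  by_cases hx : x ∈ A
  · simp [hx, h hx]
  · simp only [hx, if_false]; split_ifs <;> first | exact prod_nonneg fun _ _ => hμ _ | rfl

lemma prOf_eq_sum_inter_coord_eq (μ : Sig → ℝ) (i : Fin n) (A : Set (Fin n → Sig)) :
    prOf μ A = ∑ s, prOf μ (A ∩ {y | y i = s}) := by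
  classical
  unfold prOf
  rw [sum_comm]
  refine sum_congr rfl fun x _ => ?_
  by_cases hx : x ∈ A <;> simp [hx]

open Classical in
lemma prOf_inter_coord_eq_mul_sum (μ : Sig → ℝ) (i : Fin n) (A : Set (Fin n → Sig)) (s : Sig) :
    prOf μ (A ∩ {y | y i = s}) = μ s * ∑ y : {j // j ≠ i} → Sig,
      if (Equiv.funSplitAt i Sig).symm (s, y) ∈ A then ∏ t, μ (y t) else 0 := by
  unfold prOf
  rw [← (Equiv.funSplitAt i Sig).symm.sum_comp, Fintype.sum_prod_type, sum_eq_single s, mul_sum]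
  · refine sum_congr rfl fun y _ => ?_
    have hprod : ∏ t, μ ((Equiv.funSplitAt i Sig).symm (s, y) t) = μ s * ∏ t, μ (y t) := by
      rw [Fintype.prod_eq_mul_prod_subtype_ne _ i]
      congr 1
      · simp [Equiv.funSplitAt_symm_apply]
      · exact Fintype.prod_congr _ _ fun t => by simp [Equiv.funSplitAt_symm_apply, t.2]
    have hi : (Equiv.funSplitAt i Sig).symm (s, y) i = s := by simp [Equiv.funSplitAt_symm_apply]
    simp only [Set.mem_inter_iff, Set.mem_ofPred_eq, hi, and_true, hprod, mul_ite, mul_zero]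
  · intro s' _ hs'
    refine sum_eq_zero fun y _ => ?_
    simp [Equiv.funSplitAt_symm_apply, hs']
  · simp

lemma prOf_inter_coord_eq (hμ1 : ∑ s, μ s = 1) (i : Fin n) {A : Set (Fin n → Sig)}
    (hA : ∀ x s, Function.update x i s ∈ A ↔ x ∈ A) (s : Sig) :
    prOf μ (A ∩ {y | y i = s}) = μ s * prOf μ A := by
  classical
  have hslice : ∀ s₁ s₂ (y : {j // j ≠ i} → Sig), (Equiv.funSplitAt i Sig).symm (s₂, y) =
      Function.update ((Equiv.funSplitAt i Sig).symm (s₁, y)) i s₂ := by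
    intro s₁ s₂ y
    funext j
    by_cases hj : j = i
    · subst hj; simp [Equiv.funSplitAt_symm_apply]
    · simp [Equiv.funSplitAt_symm_apply, hj]
  have hG : ∀ s', prOf μ (A ∩ {y | y i = s'}) = μ s' * ∑ y : {j // j ≠ i} → Sig,
      if (Equiv.funSplitAt i Sig).symm (s, y) ∈ A then ∏ t, μ (y t) else 0 := by
    intro s'
    simp only [prOf_inter_coord_eq_mul_sum, hslice s s', hA]
  rw [prOf_eq_sum_inter_coord_eq μ i A, Fintype.sum_congr _ _ hG, ← sum_mul, hμ1, one_mul, hG]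

end prOf

lemma GenRestr.update_mem_event_iff {Sig : Type*} {n : ℕ} (ρ : GenRestr Sig n) {i : Fin n}
    (hI : i ∉ ρ.I) (hT : ∀ j, i ∈ ρ.T j → ρ.T j = {i}) (x : Fin n → Sig) (s : Sig) :
    Function.update x i s ∈ ρ.event ↔ x ∈ ρ.event := by
  have key : ∀ x y : Fin n → Sig, (∀ t ≠ i, x t = y t) → x ∈ ρ.event → y ∈ ρ.event := by
    rintro x y hxy ⟨hclass, hfixed⟩
    refine ⟨fun j t ht t' ht' => ?_, fun t ht => ?_⟩
    · by_cases hij : i ∈ ρ.T j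
      · rw [hT j hij, Finset.mem_singleton] at ht ht'
        rw [ht, ht']
      · rw [← hxy t (by rintro rfl; exact hij ht), ← hxy t' (by rintro rfl; exact hij ht')]
        exact hclass j t ht t' ht'
    · rw [← hxy t (by rintro rfl; exact hI ht)]
      exact hfixed t ht
  exact ⟨key _ _ fun t ht => Function.update_of_ne ht s x,
    key _ _ fun t ht => (Function.update_of_ne ht s x).symm⟩

section condDist

variable {Sig : Type*} [Fintype Sig] {n : ℕ} (μ : Sig → ℝ)

open Classical in
lemma sum_ite_mem_condDist (A B : Set (Fin n → Sig)) :
    ∑ x, (if x ∈ B then condDist μ A x else 0) = prOf μ (B ∩ A) / prOf μ A := by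
  unfold condDist prOf
  rw [sum_div]
  refine sum_congr rfl fun x _ => ?_
  by_cases hB : x ∈ B <;> by_cases hA : x ∈ A <;> simp [hA, hB]

lemma abs_sum_mul_condProb_sub_prOf_le {ι : Type*} [Fintype ι] (w : ι → ℝ)
    (A : ι → Set (Fin n → Sig)) (B : Set (Fin n → Sig)) :
    |∑ a, w a * (prOf μ (B ∩ A a) / prOf μ (A a)) - prOf μ B|
      ≤ ∑ x, |∑ a, w a * condDist μ (A a) x - ∏ t, μ (x t)| := by
  classical
  have hdiff : ∑ a, w a * (prOf μ (B ∩ A a) / prOf μ (A a)) - prOf μ B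
      = ∑ x, if x ∈ B then ∑ a, w a * condDist μ (A a) x - ∏ t, μ (x t) else 0 := by
    have hmix : ∀ a, w a * (prOf μ (B ∩ A a) / prOf μ (A a))
        = ∑ x, if x ∈ B then w a * condDist μ (A a) x else 0 := fun a => by
      simp only [← sum_ite_mem_condDist, mul_sum, mul_ite, mul_zero]
    simp only [hmix]
    rw [sum_comm, prOf, ← sum_sub_distrib]
    refine sum_congr rfl fun x _ => ?_
    split_ifs <;> simp
  rw [hdiff]
  refine (abs_sum_le_sum_abs _ _).trans (sum_le_sum fun x _ => ?_)
  split_ifs <;> simp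

lemma sum_mul_condDist_inter_coord_eq (hμ1 : ∑ s, μ s = 1) (i : Fin n) {A : Set (Fin n → Sig)}
    (hA : ∀ x s, Function.update x i s ∈ A ↔ x ∈ A) (x : Fin n → Sig) :
    ∑ s, μ s * condDist μ (A ∩ {y | y i = s}) x = condDist μ A x := by
  classical
  unfold condDist
  simp only [prOf_inter_coord_eq hμ1 i hA]
  rw [sum_eq_single (x i) (fun s _ hs => by simp [Ne.symm hs]) (by simp)]
  by_cases hx : x ∈ A
  · rcases eq_or_ne (μ (x i)) 0 with h | h
    · simp [hx, prod_eq_zero (f := fun t => μ (x t)) (mem_univ i) h, h]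
    · simp only [hx, Set.mem_inter_iff, Set.mem_ofPred_eq, and_self, if_true, ← mul_div_assoc,
        mul_div_mul_left _ _ h]
  · simp [hx]

end condDist

lemma sq_sum_mul_le_sum_mul_sq {ι : Type*} [Fintype ι] {w : ι → ℝ} (hw0 : ∀ a, 0 ≤ w a)
    (hw1 : ∑ a, w a = 1) (f : ι → ℝ) : (∑ a, w a * f a) ^ 2 ≤ ∑ a, w a * f a ^ 2 :=
  (even_two.convexOn_pow (𝕜 := ℝ)).map_sum_le (fun a _ => hw0 a) hw1 fun _ _ => Set.mem_univ _

lemma sq_add_sq_sum_mul_abs_sub_le {ι : Type*} [Fintype ι] {w : ι → ℝ} (hw0 : ∀ a, 0 ≤ w a)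
    (hw1 : ∑ a, w a = 1) (f : ι → ℝ) :
    (∑ a, w a * f a) ^ 2 + (∑ a, w a * |f a - ∑ b, w b * f b|) ^ 2 ≤ ∑ a, w a * f a ^ 2 := by
  set m := ∑ b, w b * f b
  have hvar : ∑ a, w a * (f a - m) ^ 2 = ∑ a, w a * f a ^ 2 - m ^ 2 := by
    have : ∀ a, w a * (f a - m) ^ 2 = w a * f a ^ 2 - 2 * m * (w a * f a) + m ^ 2 * w a :=
      fun a => by ring
    simp only [this, sum_add_distrib, sum_sub_distrib, ← mul_sum, hw1]
    ring
  have := sq_sum_mul_le_sum_mul_sq hw0 hw1 fun a => |f a - m|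
  simp only [sq_abs] at this
  linarith

lemma sq_prOf_div_add_sq_mul_skew_le {Sig : Type*} [Fintype Sig] {n : ℕ} {μ : Sig → ℝ}
    (hμ0 : ∀ s, 0 ≤ μ s) (hμ1 : ∑ s, μ s = 1) (i : Fin n) {A F : Set (Fin n → Sig)}
    (hFA : F ⊆ A) (hA : ∀ x s, Function.update x i s ∈ A ↔ x ∈ A) :
    (prOf μ F / prOf μ A) ^ 2
        + (prOf μ F / prOf μ A * ∑ s, |prOf μ (F ∩ {y | y i = s}) / prOf μ F - μ s|) ^ 2
      ≤ ∑ s, μ s * (prOf μ (F ∩ {y | y i = s}) / prOf μ (A ∩ {y | y i = s})) ^ 2 := by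
  set P := prOf μ A
  set S := prOf μ F
  set N : Sig → ℝ := fun s => prOf μ (F ∩ {y | y i = s})
  set q : Sig → ℝ := fun s => N s / (μ s * P)
  have hN0 : ∀ s, 0 ≤ N s := fun s => prOf_nonneg hμ0 _
  have hNle : ∀ s, N s ≤ μ s * P := fun s =>
    (prOf_mono hμ0 (Set.inter_subset_inter_left _ hFA)).trans_eq (prOf_inter_coord_eq hμ1 i hA s)
  have hS : S = ∑ s, N s := prOf_eq_sum_inter_coord_eq μ i F
  have hμq : ∀ s, μ s * q s = N s / P := by
    intro s
    rcases eq_or_ne (μ s) 0 with h | h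
    · simp [q, h, le_antisymm (by simpa [h] using hNle s) (hN0 s)]
    · rw [← mul_div_assoc, mul_div_mul_left _ _ h]
  have hmean : ∑ s, μ s * q s = S / P := by simp only [hμq, ← sum_div, hS]
  have hterm : ∀ s, S / P * |N s / S - μ s| = μ s * |q s - S / P| := by
    intro s
    have hN : S = 0 → N s = 0 := fun h0 =>
      (sum_eq_zero_iff_of_nonneg fun s _ => hN0 s).1 (hS ▸ h0) s (mem_univ s)
    calc S / P * |N s / S - μ s|
        = |S / P * (N s / S - μ s)| := by
          rw [abs_mul, abs_of_nonneg (div_nonneg (prOf_nonneg hμ0 F) (prOf_nonneg hμ0 A))]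
      _ = |μ s * q s - μ s * (S / P)| := by
          rw [hμq]
          rcases eq_or_ne S 0 with h | h
          · simp [h, hN h]
          · congr 1; field_simp
      _ = μ s * |q s - S / P| := by rw [← mul_sub, abs_mul, abs_of_nonneg (hμ0 s)]
  simp only [prOf_inter_coord_eq hμ1 i hA]
  rw [mul_sum, sum_congr rfl fun s _ => hterm s, ← hmean]
  exact sq_add_sq_sum_mul_abs_sub_le hμ0 hμ1 q

lemma one_add_sq_mul_sq_sum_mul_le {ι : Type*} [Fintype ι] {w : ι → ℝ} (hw0 : ∀ a, 0 ≤ w a)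
    (hw1 : ∑ a, w a = 1) (p t : ι → ℝ) {β D : ℝ} (hβ : 0 ≤ β) (hD : D = ∑ a, w a * p a)
    (hD0 : 0 < D) (hskew : β ≤ ∑ a, w a * p a / D * t a) :
    (1 + β ^ 2) * D ^ 2 ≤ ∑ a, w a * (p a ^ 2 + (p a * t a) ^ 2) := by
  have hβD : β * D ≤ ∑ a, w a * (p a * t a) := by
    rw [← le_div_iff₀ hD0, sum_div]
    exact hskew.trans_eq (sum_congr rfl fun a _ => by ring)
  calc (1 + β ^ 2) * D ^ 2 = D ^ 2 + (β * D) ^ 2 := by ring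
    _ ≤ ∑ a, w a * p a ^ 2 + ∑ a, w a * (p a * t a) ^ 2 :=
        add_le_add (hD ▸ sq_sum_mul_le_sum_mul_sq hw0 hw1 p)
          ((pow_le_pow_left₀ (by positivity) hβD 2).trans (sq_sum_mul_le_sum_mul_sq hw0 hw1 _))
    _ = ∑ a, w a * (p a ^ 2 + (p a * t a) ^ 2) := by simp only [mul_add, sum_add_distrib]

theorem energy_increment_of_skewed_marginal_general
    {k n : ℕ} {XX : Fin k → Type*} [∀ j, Fintype (XX j)]
    (Q : (∀ j, XX j) → ℝ) (hQ0 : ∀ x, 0 ≤ Q x) (hQ1 : ∑ x, Q x = 1)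
    (i : Fin n)
    (E : Set (Fin n → ∀ j, XX j))
    (α : ℝ) (hα : α = prOf Q E) (hα0 : 0 < α)
    {ι : Type*} [Fintype ι] (w : ι → ℝ) (hw0 : ∀ a, 0 ≤ w a) (hw1 : ∑ a, w a = 1)
    (R : ι → GenRestr (∀ j, XX j) n) (m : ℕ) (ε β : ℝ)
    (hnotI : ∀ a, i ∉ (R a).I)
    (hsing : ∀ a j, i ∈ (R a).T j → (R a).T j = {i})
    (hfree : ∀ a, m + 1 ≤ (R a).m)
    (hR : ∑ x : Fin n → ∀ j, XX j,
        |∑ a, w a * condDist Q (R a).event x - ∏ t, Q (x t)| ≤ ε)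
    (hε0 : 0 ≤ ε) (hεα : ε < α) (hβ0 : 0 < β) (hβ1 : β ≤ 1)
    (D : ℝ)
    (hD : D = ∑ a, w a * (prOf Q (E ∩ (R a).event) / prOf Q ((R a).event)))
    (hskew : β ≤ ∑ a,
        (w a * (prOf Q (E ∩ (R a).event) / prOf Q ((R a).event)) / D) *
          ∑ xt : ∀ j, XX j,
            |prOf Q (E ∩ (R a).event ∩ {x | x i = xt}) / prOf Q (E ∩ (R a).event)
              - Q xt|) :
    (∀ a : ι, m ≤ (R a).m - 1) ∧
    (∑ x : Fin n → ∀ j, XX j,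
        |(∑ a, w a * ∑ xt : ∀ j, XX j,
            Q xt * condDist Q ((R a).event ∩ {y | y i = xt}) x)
          - ∏ t, Q (x t)| ≤ ε) ∧
    α ^ 2 * (1 + β ^ 2 - 6 * ε / α)
      ≤ ∑ a, w a * ∑ xt : ∀ j, XX j,
          Q xt * (prOf Q (E ∩ (R a).event ∩ {y | y i = xt})
              / prOf Q ((R a).event ∩ {y | y i = xt})) ^ 2 := by
  have hinv a := (R a).update_mem_event_iff (hnotI a) (hsing a)
  refine ⟨fun a => by have := hfree a; omega, ?_, ?_⟩
  · simpa only [sum_mul_condDist_inter_coord_eq Q hQ1 i (hinv _)] using hR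
  have hDα : α - ε ≤ D := by
    have := (abs_sum_mul_condProb_sub_prOf_le Q w (fun a => (R a).event) E).trans hR
    rw [← hα, ← hD] at this
    linarith [(abs_le.mp this).1]
  calc α ^ 2 * (1 + β ^ 2 - 6 * ε / α) = α ^ 2 * (1 + β ^ 2) - 6 * ε * α := by field_simp
    _ ≤ (1 + β ^ 2) * (α - ε) ^ 2 := by
        have hβ2 : β ^ 2 ≤ 1 := pow_le_one₀ hβ0.le hβ1
        nlinarith [mul_nonneg (mul_nonneg hα0.le hε0) (sub_nonneg.2 hβ2), mul_nonneg hα0.le hε0,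
          mul_nonneg (sq_nonneg ε) (sq_nonneg β)]
    _ ≤ (1 + β ^ 2) * D ^ 2 := by gcongr
    _ ≤ _ := one_add_sq_mul_sq_sum_mul_le hw0 hw1 _ _ hβ0.le hD (by linarith) hskew
    _ ≤ _ := sum_le_sum fun a _ => mul_le_mul_of_nonneg_left
        (sq_prOf_div_add_sq_mul_skew_le hQ0 hQ1 i Set.inter_subset_right (hinv a)) (hw0 a)

/-- ℓ² energy increment: In the repeated-game setting (`X ∼ Q^{⊗n}` over
`𝒳^{⊗n}` with `𝒳 = ∏ⱼ 𝒳ʲ`), let `E = E¹ × ⋯ × E^k` be a product event with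
`α := Pr[E] > 0`.  Let `𝓡ᵢ` (given by weights `w` on restrictions `R a`) be an `(m, ε)`-
generalized random restriction acting only on the coordinates `[n] \ {i}` (coordinate `i`
lies in a singleton class), with `ε < α`, and suppose that on average over
`ρ ∼ 𝓡ᵢ|E` the conditional marginal of `Xᵢ` is `β`-far from `Q` in `ℓ¹`.  Let `𝓡` sample
`ρ ∼ 𝓡ᵢ`, `x̃ ∼ Q` and additionally fix coordinate `i` to `x̃`.  Then `𝓡` is an `(m, ε)`-
generalized random restriction on `𝒳^{⊗n}` (each outcome has at least `m` free
coordinates, and the average conditional distribution is `ε`-close to `Q^{⊗n}`), and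
`𝔼_{ρ' ∼ 𝓡}[Pr[E|E_{ρ'}]²] ≥ α²(1 + β² - 6ε/α)`. -/
theorem energy_increment_of_skewed_marginal
    {k n : ℕ} {XX : Fin k → Type*} [∀ j, Fintype (XX j)]
    (Q : (∀ j, XX j) → ℝ) (hQ0 : ∀ x, 0 ≤ Q x) (hQ1 : ∑ x, Q x = 1)
    (i : Fin n)
    (Ej : ∀ j, Set (Fin n → XX j))
    (E : Set (Fin n → ∀ j, XX j))
    (hEdef : E = {x | ∀ j, (fun t => x t j) ∈ Ej j})
    (α : ℝ) (hα : α = prOf Q E) (hα0 : 0 < α)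
    {ι : Type*} [Fintype ι] (w : ι → ℝ) (hw0 : ∀ a, 0 ≤ w a) (hw1 : ∑ a, w a = 1)
    (R : ι → GenRestr (∀ j, XX j) n) (m : ℕ) (ε β : ℝ)
    (hnotI : ∀ a, i ∉ (R a).I)
    (hsing : ∀ a j, i ∈ (R a).T j → (R a).T j = {i})
    (hfree : ∀ a, m + 1 ≤ (R a).m)
    (hR : ∑ x : Fin n → ∀ j, XX j,
        |∑ a, w a * condDist Q (R a).event x - ∏ t, Q (x t)| ≤ ε)
    (hε0 : 0 ≤ ε) (hεα : ε < α) (hβ0 : 0 < β) (hβ1 : β ≤ 1)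
    (D : ℝ)
    (hD : D = ∑ a, w a * (prOf Q (E ∩ (R a).event) / prOf Q ((R a).event)))
    (hskew : β ≤ ∑ a,
        (w a * (prOf Q (E ∩ (R a).event) / prOf Q ((R a).event)) / D) *
          ∑ xt : ∀ j, XX j,
            |prOf Q (E ∩ (R a).event ∩ {x | x i = xt}) / prOf Q (E ∩ (R a).event)
              - Q xt|) :
    (∀ a : ι, m ≤ (R a).m - 1) ∧
    (∑ x : Fin n → ∀ j, XX j,
        |(∑ a, w a * ∑ xt : ∀ j, XX j,
            Q xt * condDist Q ((R a).event ∩ {y | y i = xt}) x)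
          - ∏ t, Q (x t)| ≤ ε) ∧
    α ^ 2 * (1 + β ^ 2 - 6 * ε / α)
      ≤ ∑ a, w a * ∑ xt : ∀ j, XX j,
          Q xt * (prOf Q (E ∩ (R a).event ∩ {y | y i = xt})
              / prOf Q ((R a).event ∩ {y | y i = xt})) ^ 2 :=
  energy_increment_of_skewed_marginal_general Q hQ0 hQ1 i E α hα hα0 w hw0 hw1 R m ε β hnotI hsing
    hfree hR hε0 hεα hβ0 hβ1 D hD hskew
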